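/- For fixed B > 0, K₂ > 0 and integer N ≥ 1, the function θ ↦ (K₂/B²)·(1/sin²θ)·(1 + Σ_{i=1}^{N} 6i·cos(2iθ)) is strictly decreasing on (0, π/(4N+2)]. -/

import Mathlib

/-!
The area is the product of `(K₂ / B²) / sin² θ`, which is positive and strictly decreasing on
`(0, π / 2]`, and of `1 + ∑ 6 i cos (2 i θ)`. For `θ ≤ π / (4N + 2)` every angle `2 i θ` with
`i ≤ N` lies in `[0, π / 2]`, where cosine is nonnegative and decreasing, so the second factor is
nonincreasing and at least `1`.
-/

open Real Set

theorem StrictAntiOn.mul_antitoneOn {α M₀ : Type*} [Preorder α] [Mul M₀] [Zero M₀]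
    [Preorder M₀] [PosMulMono M₀] [MulPosStrictMono M₀] {f g : α → M₀} {s : Set α}
    (hf : StrictAntiOn f s) (hg : AntitoneOn g s) (hf₀ : ∀ x ∈ s, 0 ≤ f x)
    (hg₀ : ∀ x ∈ s, 0 < g x) : StrictAntiOn (f * g) s :=
  fun _ ha _ hb h ↦ mul_lt_mul (hf ha hb h) (hg ha hb h.le) (hg₀ _ hb) (hf₀ _ ha)

theorem strictAntiOn_one_div_sin_sq :
    StrictAntiOn (fun θ ↦ 1 / sin θ ^ 2) (Ioc 0 (π / 2)) := by
  intro x hx y hy hxy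
  have hsin_pos : 0 < sin x := sin_pos_of_pos_of_lt_pi hx.1 (by linarith [hx.2, pi_pos])
  have hsin_lt : sin x < sin y :=
    strictMonoOn_sin ⟨by linarith [hx.1, pi_pos], hx.2⟩ ⟨by linarith [hy.1, pi_pos], hy.2⟩ hxy
  exact one_div_lt_one_div_of_lt (by positivity) (pow_lt_pow_left₀ hsin_lt hsin_pos.le two_ne_zero)

theorem two_mul_mul_mem_Icc_zero_pi_div_two {N i : ℕ} (hi : i ≤ N) {θ : ℝ}
    (hθ : θ ∈ Icc 0 (π / (4 * N + 2))) : 2 * i * θ ∈ Icc 0 (π / 2) := by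
  obtain ⟨hθ₀, hθN⟩ := hθ
  have hiN : (i : ℝ) ≤ N := by exact_mod_cast hi
  refine ⟨by positivity, ?_⟩
  calc 2 * i * θ ≤ 2 * N * (π / (4 * N + 2)) := by gcongr
    _ = π / 2 * (4 * N / (4 * N + 2)) := by field_simp; ring
    _ ≤ π / 2 :=
      mul_le_of_le_one_right (by positivity) ((div_le_one (by positivity)).2 (by linarith))

section CosineSum

variable (a : ℕ → ℝ) (N : ℕ)

theorem antitoneOn_sum_mul_cos (ha : ∀ i ∈ Finset.Icc 1 N, 0 ≤ a i) :
    AntitoneOn (fun θ ↦ ∑ i ∈ Finset.Icc 1 N, a i * cos (2 * i * θ))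
      (Icc 0 (π / (4 * N + 2))) := by
  intro x hx y hy hxy
  refine Finset.sum_le_sum fun i hi ↦ mul_le_mul_of_nonneg_left ?_ (ha i hi)
  have hiN := (Finset.mem_Icc.1 hi).2
  have hx' := two_mul_mul_mem_Icc_zero_pi_div_two hiN hx
  have hy' := two_mul_mul_mem_Icc_zero_pi_div_two hiN hy
  exact antitoneOn_cos ⟨hx'.1, by linarith [hx'.2, pi_pos]⟩ ⟨hy'.1, by linarith [hy'.2, pi_pos]⟩
    (by gcongr)

theorem sum_mul_cos_nonneg (ha : ∀ i ∈ Finset.Icc 1 N, 0 ≤ a i) {θ : ℝ}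
    (hθ : θ ∈ Icc 0 (π / (4 * N + 2))) :
    0 ≤ ∑ i ∈ Finset.Icc 1 N, a i * cos (2 * i * θ) :=
  Finset.sum_nonneg fun i hi ↦ mul_nonneg (ha i hi)
    (cos_nonneg_of_mem_Icc (Icc_subset_Icc (by linarith [pi_pos]) le_rfl
      (two_mul_mul_mem_Icc_zero_pi_div_two (Finset.mem_Icc.1 hi).2 hθ)))

end CosineSum

theorem A_ADR_strictAnti_in_theta_general (K₂ B : ℝ) (N : ℕ) (hK : 0 < K₂) (hB : 0 < B) :
    StrictAntiOn (fun θ : ℝ =>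
      (K₂ / B ^ 2) * (1 / Real.sin θ ^ 2) *
        (1 + ∑ i ∈ Finset.Icc 1 N, 6 * (i : ℝ) * Real.cos (2 * (i : ℝ) * θ)))
      (Set.Ioc 0 (Real.pi / (4 * (N : ℝ) + 2))) := by
  have hsub : Ioc 0 (π / (4 * N + 2)) ⊆ Ioc 0 (π / 2) :=
    Ioc_subset_Ioc_right <| div_le_div_of_nonneg_left pi_pos.le two_pos <| by
      linarith [N.cast_nonneg (α := ℝ)]
  have hcoeff : ∀ i ∈ Finset.Icc 1 N, (0 : ℝ) ≤ 6 * i := fun i _ ↦ by positivity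
  have hsin : StrictAntiOn (fun θ ↦ K₂ / B ^ 2 * (1 / sin θ ^ 2)) (Ioc 0 (π / (4 * N + 2))) :=
    (strictMono_mul_left_of_pos (by positivity)).comp_strictAntiOn
      (strictAntiOn_one_div_sin_sq.mono hsub)
  have hsum := ((antitoneOn_sum_mul_cos _ N hcoeff).mono Ioc_subset_Icc_self).const_add 1
  refine hsin.mul_antitoneOn hsum (fun θ _ ↦ by positivity) fun θ hθ ↦ ?_
  linarith [sum_mul_cos_nonneg _ N hcoeff (Ioc_subset_Icc_self hθ)]

theorem A_ADR_strictAnti_in_theta (K₂ B : ℝ) (N : ℕ) (hK : 0 < K₂) (hB : 0 < B)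
    (hN : 1 ≤ N) :
    StrictAntiOn (fun θ : ℝ =>
      (K₂ / B ^ 2) * (1 / Real.sin θ ^ 2) *
        (1 + ∑ i ∈ Finset.Icc 1 N, 6 * (i : ℝ) * Real.cos (2 * (i : ℝ) * θ)))
      (Set.Ioc 0 (Real.pi / (4 * (N : ℝ) + 2))) :=
  A_ADR_strictAnti_in_theta_general K₂ B N hK hB
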